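/- arXiv:2107.12084 — 4 statements merged into one kernel-verified Lean document; each statement's English description precedes it below -/
import Mathlib

section
/- If H_F(x̄) := F(x̄) − K is a convex and K-upper bounded set, then the upper inner function g_{u,x̄} is a convex, K-monotone functional that is finite and continuous on all of Y (K-monotone means y₂ − y₁ ∈ K implies g_{u,x̄}(y₁) ≤ g_{u,x̄}(y₂)). -/
open Set Topology Metric Pointwise

/-- The Gerstewitz (Tammer) scalarizing functional `Ψ_e(y) = inf {t : y ∈ t•e - K}`. -/
noncomputable def psiE {Y : Type*} [NormedAddCommGroup Y] [NormedSpace ℝ Y]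
    (K : Set Y) (e : Y) (y : Y) : ℝ :=
  sInf {t : ℝ | t • e - y ∈ K}

/-- The lower inner function `g_l(x,z) = inf_{y ∈ F x} Ψ_e (y - z)` (with values in `EReal`). -/
noncomputable def glow {X Y : Type*} [NormedAddCommGroup X] [NormedSpace ℝ X]
    [NormedAddCommGroup Y] [NormedSpace ℝ Y]
    (K : Set Y) (e : Y) (F : X → Set Y) (x : X) (z : Y) : EReal :=
  ⨅ y ∈ F x, (psiE K e (y - z) : EReal)

/-- The upper inner function `g_{u,x̄}(y) = inf_{ȳ ∈ F x̄} Ψ_e (y - ȳ)`. -/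
noncomputable def gupp {X Y : Type*} [NormedAddCommGroup X] [NormedSpace ℝ X]
    [NormedAddCommGroup Y] [NormedSpace ℝ Y]
    (K : Set Y) (e : Y) (F : X → Set Y) (xbar : X) (y : Y) : EReal :=
  ⨅ yb ∈ F xbar, (psiE K e (y - yb) : EReal)

/-- The lower scalarizing functional `f_{l,x̄}(x) = sup_{ȳ ∈ F x̄} g_l(x, ȳ)`. -/
noncomputable def flow {X Y : Type*} [NormedAddCommGroup X] [NormedSpace ℝ X]
    [NormedAddCommGroup Y] [NormedSpace ℝ Y]
    (K : Set Y) (e : Y) (F : X → Set Y) (xbar : X) (x : X) : EReal :=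
  ⨆ yb ∈ F xbar, glow K e F x yb

/-- The upper scalarizing functional `f_{u,x̄}(x) = sup_{y ∈ F x} g_{u,x̄}(y)`. -/
noncomputable def fupp {X Y : Type*} [NormedAddCommGroup X] [NormedSpace ℝ X]
    [NormedAddCommGroup Y] [NormedSpace ℝ Y]
    (K : Set Y) (e : Y) (F : X → Set Y) (xbar : X) (x : X) : EReal :=
  ⨆ y ∈ F x, gupp K e F xbar y

/-- Weakly minimal elements: `WMin(A,K) = {a ∈ A : (a - int K) ∩ A = ∅}`. -/
def wMinSet {Y : Type*} [NormedAddCommGroup Y] (A K : Set Y) : Set Y :=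
  {a ∈ A | ∀ b ∈ A, a - b ∉ interior K}

/-- Weakly maximal elements: `WMax(A,K) = {a ∈ A : (a + int K) ∩ A = ∅}`. -/
def wMaxSet {Y : Type*} [NormedAddCommGroup Y] (A K : Set Y) : Set Y :=
  {a ∈ A | ∀ b ∈ A, b - a ∉ interior K}

/-- Minimal elements: `Min(A,K) = {a ∈ A : (a - K) ∩ A = {a}}`. -/
def minSet {Y : Type*} [AddGroup Y] (A K : Set Y) : Set Y :=
  {a ∈ A | ∀ b ∈ A, a - b ∈ K → b = a}

/-!
Write `H = F(x̄) - K`. Since `Ψ_e(y - ȳ) ≤ t` iff `y - t•e ∈ ȳ - K`, the function `g_{u,x̄}` is the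
Gerstewitz functional of the set `H` itself, `φ_H(y) = inf {t : y - t•e ∈ H}`. The set `H` satisfies
`H - K ⊆ H`, so `y₁ ≤_K y₂ + s•e` gives `φ_H(y₁) ≤ φ_H(y₂) + s`; with `s = 0` this is
monotonicity, and with `s = c‖y₁ - y₂‖`, where `c` comes from a ball around `e` inside `K`, it is
Lipschitz continuity. Convexity of `H` passes to `φ_H`. Finiteness needs the infimum to be over a
nonempty set (`H ≠ ∅` and `e ∈ int K`) that is bounded below: `H ⊆ μ•e - K`, and `-e` has positive
distance from the closed pointed cone `K`. The degenerate case `e = 0` forces `K = Y`, and then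
`g_{u,x̄}` is identically `0`.
-/

noncomputable def gerstewitz {Y : Type*} [AddCommGroup Y] [Module ℝ Y] (H : Set Y) (e y : Y) :
    ℝ :=
  sInf {t : ℝ | y - t • e ∈ H}

section Cone

variable {Y : Type*} [NormedAddCommGroup Y] [NormedSpace ℝ Y] {K : Set Y} {e : Y}

lemma add_mem_of_convex_of_smul_mem (hKcv : Convex ℝ K)
    (hKcone : ∀ t : ℝ, 0 ≤ t → ∀ y ∈ K, t • y ∈ K) {a b : Y} (ha : a ∈ K) (hb : b ∈ K) :
    a + b ∈ K := by
  have h := hKcone 2 zero_le_two _ (hKcv ha hb (by norm_num : (0:ℝ) ≤ 1 / 2)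
    (by norm_num : (0:ℝ) ≤ 1 / 2) (by norm_num))
  convert h using 1
  module

lemma sub_sub_subset_sub_of_convex_of_smul_mem (hKcv : Convex ℝ K)
    (hKcone : ∀ t : ℝ, 0 ≤ t → ∀ y ∈ K, t • y ∈ K) (A : Set Y) : A - K - K ⊆ A - K := by
  rw [sub_sub]
  exact sub_subset_sub_left (add_subset_iff.2 fun _ ha _ hb =>
    add_mem_of_convex_of_smul_mem hKcv hKcone ha hb)

lemma eq_univ_of_zero_mem_interior (hKcone : ∀ t : ℝ, 0 ≤ t → ∀ y ∈ K, t • y ∈ K)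
    (h0 : (0 : Y) ∈ interior K) : K = univ := by
  refine eq_univ_of_forall fun y => ?_
  obtain ⟨r, hr, hy⟩ := (absorbent_nhds_zero (𝕜 := ℝ) (mem_interior_iff_mem_nhds.mp h0) y).exists_pos
  obtain ⟨k, hk, rfl⟩ := hy r (by rw [Real.norm_of_nonneg hr.le]) rfl
  exact hKcone r hr.le k hk

lemma exists_mul_norm_smul_sub_mem (hKcone : ∀ t : ℝ, 0 ≤ t → ∀ y ∈ K, t • y ∈ K)
    (he : e ∈ interior K) : ∃ c : NNReal, ∀ z : Y, ((c : ℝ) * ‖z‖) • e - z ∈ K := by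
  obtain ⟨ε, hε, hball⟩ := Metric.mem_nhds_iff.mp (mem_interior_iff_mem_nhds.mp he)
  refine ⟨⟨2 / ε, by positivity⟩, fun z => show (2 / ε * ‖z‖) • e - z ∈ K from ?_⟩
  rcases eq_or_ne z 0 with rfl | hz
  · simpa using hKcone 0 le_rfl e (interior_subset he)
  have hz' : 0 < ‖z‖ := norm_pos_iff.mpr hz
  have hnorm : ‖(ε / (2 * ‖z‖)) • z‖ = ε / 2 := by
    rw [norm_smul, Real.norm_of_nonneg (by positivity)]
    field_simp
  have hmem : e - (ε / (2 * ‖z‖)) • z ∈ K := hball <| by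
    rw [mem_ball, dist_eq_norm, sub_sub_cancel_left, norm_neg, hnorm]
    linarith
  have h := hKcone (2 / ε * ‖z‖) (by positivity) _ hmem
  rwa [smul_sub, smul_smul, show 2 / ε * ‖z‖ * (ε / (2 * ‖z‖)) = 1 by field_simp,
    one_smul] at h

/-- Since `-e` has positive distance `ρ` from `K`, a point `-e + t⁻¹ • z ∈ K` with `t < 0` must
satisfy `‖z‖ ≥ ρ |t|`. -/
lemma exists_neg_mul_norm_le_of_smul_sub_mem (hKcl : IsClosed K)
    (hKcone : ∀ t : ℝ, 0 ≤ t → ∀ y ∈ K, t • y ∈ K) (he : -e ∉ K) :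
    ∃ r : ℝ, ∀ (z : Y) (t : ℝ), t • e - z ∈ K → -(r * ‖z‖) ≤ t := by
  obtain ⟨ρ, hρ, hball⟩ := Metric.isOpen_iff.mp hKcl.isOpen_compl (-e) he
  refine ⟨ρ⁻¹, fun z t ht => ?_⟩
  by_contra! hlt
  have ht0 : 0 < -t := by linarith [show 0 ≤ ρ⁻¹ * ‖z‖ by positivity]
  have hnorm : ‖z‖ < ρ * -t := (inv_mul_lt_iff₀ hρ).1 (by linarith)
  apply hball _ (hKcone (-t)⁻¹ (by positivity) _ ht)
  have hdiff : (-t)⁻¹ • (t • e - z) - -e = -((-t)⁻¹ • z) := by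
    rw [smul_sub, smul_smul, show (-t)⁻¹ * t = -1 by field_simp [(neg_pos.1 ht0).ne]]
    module
  rw [mem_ball, dist_eq_norm, hdiff, norm_neg, norm_smul, Real.norm_of_nonneg (by positivity),
    inv_mul_lt_iff₀ ht0, mul_comm]
  exact hnorm

end Cone

section Gerstewitz

variable {Y : Type*} [NormedAddCommGroup Y] [NormedSpace ℝ Y] {K H : Set Y} {e : Y}

lemma nonempty_setOf_sub_smul_mem (hH : H.Nonempty) (hHK : H - K ⊆ H) {c : ℝ}
    (hc : ∀ z : Y, (c * ‖z‖) • e - z ∈ K) (y : Y) : {t : ℝ | y - t • e ∈ H}.Nonempty := by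
  obtain ⟨h, hh⟩ := hH
  refine ⟨c * ‖y - h‖, hHK ?_⟩
  convert sub_mem_sub hh (hc (y - h)) using 1
  abel

lemma bddBelow_setOf_sub_smul_mem {μ : ℝ} (hHub : ∀ a ∈ H, μ • e - a ∈ K) {r : ℝ}
    (hr : ∀ (z : Y) (t : ℝ), t • e - z ∈ K → -(r * ‖z‖) ≤ t) (y : Y) :
    BddBelow {t : ℝ | y - t • e ∈ H} := by
  refine ⟨-(r * ‖y‖) - μ, fun t ht => ?_⟩
  have := hr y (μ + t) (by convert hHub _ ht using 1; rw [add_smul]; abel)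
  linarith

lemma gerstewitz_le_add (hHK : H - K ⊆ H) {y₁ y₂ : Y}
    (hne : {t : ℝ | y₂ - t • e ∈ H}.Nonempty) (hbdd : BddBelow {t : ℝ | y₁ - t • e ∈ H})
    {s : ℝ} (hs : s • e - (y₁ - y₂) ∈ K) :
    gerstewitz H e y₁ ≤ gerstewitz H e y₂ + s := by
  rw [← sub_le_iff_le_add]
  refine le_csInf hne fun t (ht : y₂ - t • e ∈ H) => sub_le_iff_le_add.2 (csInf_le hbdd (hHK ?_))
  show y₁ - (t + s) • e ∈ H - K
  convert sub_mem_sub ht hs using 1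
  rw [add_smul]
  abel

variable (hne : ∀ y, {t : ℝ | y - t • e ∈ H}.Nonempty)
  (hbdd : ∀ y, BddBelow {t : ℝ | y - t • e ∈ H})
include hne hbdd

lemma gerstewitz_mono (hHK : H - K ⊆ H) {y₁ y₂ : Y} (h : y₂ - y₁ ∈ K) :
    gerstewitz H e y₁ ≤ gerstewitz H e y₂ := by
  simpa using gerstewitz_le_add hHK (hne y₂) (hbdd y₁) (s := 0) (by simpa using h)

lemma lipschitzWith_gerstewitz (hHK : H - K ⊆ H) {c : NNReal}
    (hc : ∀ z : Y, ((c : ℝ) * ‖z‖) • e - z ∈ K) : LipschitzWith c (gerstewitz H e) :=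
  LipschitzWith.of_le_add_mul c fun y₁ y₂ => by
    rw [dist_eq_norm]
    exact gerstewitz_le_add hHK (hne y₂) (hbdd y₁) (hc _)

lemma convexOn_gerstewitz (hH : Convex ℝ H) : ConvexOn ℝ univ (gerstewitz H e) := by
  refine ⟨convex_univ, fun y₁ _ y₂ _ a b ha hb hab => le_of_forall_pos_le_add fun δ hδ => ?_⟩
  obtain ⟨t₁, ht₁, hlt₁⟩ := exists_lt_of_csInf_lt (hne y₁) (lt_add_of_pos_right _ hδ)
  obtain ⟨t₂, ht₂, hlt₂⟩ := exists_lt_of_csInf_lt (hne y₂) (lt_add_of_pos_right _ hδ)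
  have hmem : a • y₁ + b • y₂ - (a * t₁ + b * t₂) • e ∈ H := by
    convert hH ht₁ ht₂ ha hb hab using 1
    module
  calc gerstewitz H e (a • y₁ + b • y₂) ≤ a * t₁ + b * t₂ := csInf_le (hbdd _) hmem
    _ ≤ a * (gerstewitz H e y₁ + δ) + b * (gerstewitz H e y₂ + δ) :=
      add_le_add (mul_le_mul_of_nonneg_left hlt₁.le ha) (mul_le_mul_of_nonneg_left hlt₂.le hb)
    _ = a • gerstewitz H e y₁ + b • gerstewitz H e y₂ + δ := by
      rw [smul_eq_mul, smul_eq_mul]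
      linear_combination δ * hab

end Gerstewitz

section UpperInner

variable {X Y : Type*} [NormedAddCommGroup X] [NormedSpace ℝ X]
  [NormedAddCommGroup Y] [NormedSpace ℝ Y] {K : Set Y} {e : Y} {F : X → Set Y} {xbar : X}

lemma gupp_eq_gerstewitz (hK : ∀ z : Y, {t : ℝ | t • e - z ∈ K}.Nonempty)
    (hF : (F xbar).Nonempty) {y : Y} (hbdd : BddBelow {t : ℝ | y - t • e ∈ F xbar - K}) :
    gupp K e F xbar y = gerstewitz (F xbar - K) e y := by
  have hsub : ∀ yb ∈ F xbar, {t : ℝ | t • e - (y - yb) ∈ K} ⊆ {t | y - t • e ∈ F xbar - K} :=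
    fun yb hyb t (ht : t • e - (y - yb) ∈ K) => by
      show y - t • e ∈ F xbar - K
      convert sub_mem_sub hyb ht using 1
      abel
  apply le_antisymm
  · obtain ⟨yb, hyb⟩ := hF
    rw [gerstewitz, Monotone.map_csInf_of_continuousAt continuous_coe_real_ereal.continuousAt
      EReal.coe_strictMono.monotone ((hK _).mono (hsub yb hyb)) hbdd]
    refine le_sInf ?_
    rintro _ ⟨t, ⟨yb, hyb, k, hk, hyt : yb - k = y - t • e⟩, rfl⟩
    refine iInf₂_le_of_le yb hyb (EReal.coe_le_coe_iff.2 (csInf_le (hbdd.mono (hsub yb hyb)) ?_))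
    show t • e - (y - yb) ∈ K
    convert hk using 1
    linear_combination (norm := module) hyt
  · exact le_iInf₂ fun yb hyb => EReal.coe_le_coe_iff.2 (csInf_le_csInf hbdd (hK _) (hsub yb hyb))

lemma gupp_eq_zero_of_eq_univ (hK : K = univ) (hF : (F xbar).Nonempty) :
    gupp K e F xbar = fun _ => ((0 : ℝ) : EReal) := by
  funext y
  simp only [gupp, psiE, hK, mem_univ, ofPred_true, Real.sInf_univ]
  exact biInf_const hF

end UpperInner

theorem stmt4_general
    {X Y : Type*} [NormedAddCommGroup X] [NormedSpace ℝ X]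
    [NormedAddCommGroup Y] [NormedSpace ℝ Y]
    (K : Set Y) (e : Y) (F : X → Set Y) (Ω : Set X) (xbar : X)
    (hKcl : IsClosed K) (hKcv : Convex ℝ K)
    (hKcone : ∀ t : ℝ, 0 ≤ t → ∀ y ∈ K, t • y ∈ K)
    (hKpt : K ∩ (-K) = {0})
    (he : e ∈ interior K)
    (hΩdom : Ω ⊆ interior {x | (F x).Nonempty})
    (hxΩ : xbar ∈ Ω)
    (hHconv : Convex ℝ (F xbar - K))
    (hHub : ∃ μ > (0:ℝ), ∀ a ∈ F xbar - K, μ • e - a ∈ K) :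
    Convex ℝ {p : Y × ℝ | gupp K e F xbar p.1 ≤ (p.2 : EReal)} ∧
    (∀ y₁ y₂ : Y, y₂ - y₁ ∈ K → gupp K e F xbar y₁ ≤ gupp K e F xbar y₂) ∧
    (∀ y : Y, gupp K e F xbar y ≠ ⊥ ∧ gupp K e F xbar y ≠ ⊤) ∧
    Continuous (gupp K e F xbar) := by
  have hF : (F xbar).Nonempty := (interior_subset (hΩdom hxΩ) :)
  obtain ⟨φ, hφ, hconv, hmono, hcont⟩ : ∃ φ : Y → ℝ, gupp K e F xbar = (fun y => (φ y : EReal)) ∧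
      ConvexOn ℝ univ φ ∧ (∀ y₁ y₂, y₂ - y₁ ∈ K → φ y₁ ≤ φ y₂) ∧ Continuous φ := by
    rcases eq_or_ne e 0 with rfl | he0
    · exact ⟨fun _ => 0, gupp_eq_zero_of_eq_univ (eq_univ_of_zero_mem_interior hKcone he) hF,
        convexOn_const 0 convex_univ, fun _ _ _ => le_rfl, continuous_const⟩
    have hneg : -e ∉ K := fun h => he0 <| by
      have hpt : e ∈ K ∩ -K := ⟨interior_subset he, mem_neg.2 h⟩
      rwa [hKpt] at hpt
    obtain ⟨μ, -, hμ⟩ := hHub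
    obtain ⟨c, hc⟩ := exists_mul_norm_smul_sub_mem hKcone he
    obtain ⟨r, hr⟩ := exists_neg_mul_norm_le_of_smul_sub_mem hKcl hKcone hneg
    have hHK := sub_sub_subset_sub_of_convex_of_smul_mem hKcv hKcone (F xbar)
    have hne := nonempty_setOf_sub_smul_mem (hF.sub ⟨e, interior_subset he⟩) hHK hc
    have hbdd := bddBelow_setOf_sub_smul_mem hμ hr
    exact ⟨gerstewitz (F xbar - K) e,
      funext fun y => gupp_eq_gerstewitz (fun z => ⟨_, hc z⟩) hF (hbdd y),
      convexOn_gerstewitz hne hbdd hHconv, fun _ _ => gerstewitz_mono hne hbdd hHK,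
      (lipschitzWith_gerstewitz hne hbdd hHK hc).continuous⟩
  rw [hφ]
  refine ⟨?_, fun y₁ y₂ h => EReal.coe_le_coe_iff.2 (hmono y₁ y₂ h),
    fun y => ⟨EReal.coe_ne_bot _, EReal.coe_ne_top _⟩, continuous_coe_real_ereal.comp hcont⟩
  simpa only [mem_univ, true_and, EReal.coe_le_coe_iff] using hconv.convex_epigraph

/-- if H_F(x̄) = F(x̄) - K is convex and K-upper bounded, then g_{u,x̄} is a
convex, K-monotone functional that is finite and continuous on all of Y. -/
theorem stmt4
    {X Y : Type*} [NormedAddCommGroup X] [NormedSpace ℝ X] [CompleteSpace X]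
    [NormedAddCommGroup Y] [NormedSpace ℝ Y] [CompleteSpace Y]
    (K : Set Y) (e : Y) (F : X → Set Y) (Ω : Set X) (xbar : X)
    (hKcl : IsClosed K) (hKcv : Convex ℝ K)
    (hKcone : ∀ t : ℝ, 0 ≤ t → ∀ y ∈ K, t • y ∈ K)
    (hKpt : K ∩ (-K) = {0})
    (he : e ∈ interior K)
    (hΩne : Ω.Nonempty) (hΩcl : IsClosed Ω)
    (hΩdom : Ω ⊆ interior {x | (F x).Nonempty})
    (hxΩ : xbar ∈ Ω)
    (hHconv : Convex ℝ (F xbar - K))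
    (hHub : ∃ μ > (0:ℝ), ∀ a ∈ F xbar - K, μ • e - a ∈ K) :
    Convex ℝ {p : Y × ℝ | gupp K e F xbar p.1 ≤ (p.2 : EReal)} ∧
    (∀ y₁ y₂ : Y, y₂ - y₁ ∈ K → gupp K e F xbar y₁ ≤ gupp K e F xbar y₂) ∧
    (∀ y : Y, gupp K e F xbar y ≠ ⊥ ∧ gupp K e F xbar y ≠ ⊤) ∧
    Continuous (gupp K e F xbar) :=
  stmt4_general K e F Ω xbar hKcl hKcv hKcone hKpt he hΩdom hxΩ hHconv hHub
end

section
/- Let F be Lipschitzian on a set U ⊆ X with constant ℓ > 0, with F(x) ≠ ∅ for all x ∈ U, and let f : X × Y → ℝ ∪ {±∞} be Lipschitzian on (U × Y) ∩ gph F with constant ℓ' > 0 (with respect to the sum norm ‖(x,y)‖ = ‖x‖ + ‖y‖). Define the marginal function Φ(x) := sup_{y ∈ F(x)} f(x,y). If Φ(x̄) < +∞ for some x̄ ∈ U, then Φ is finite and Lipschitzian on U with constant ℓ'(1+ℓ). -/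
open Set Topology Metric Pointwise

/-!
Every `y ∈ F x` has a partner `y' ∈ F x'` with `‖y - y'‖ ≤ ℓ‖x - x'‖`, so
`f(x,y) ≤ f(x',y') + ℓ'(1 + ℓ)‖x - x'‖ ≤ Φ(x') + ℓ'(1 + ℓ)‖x - x'‖`. Taking the supremum over `y`
gives this one-sided estimate in `EReal`; with `x' = x̄` it makes `Φ` finite on `U`, and then the
two one-sided estimates give the Lipschitz bound.
-/

theorem exists_mem_norm_sub_le_of_subset_add_closedBall {Y : Type*} [SeminormedAddCommGroup Y]
    {s t : Set Y} {r : ℝ} (hst : s ⊆ t + closedBall 0 r) {y : Y} (hy : y ∈ s) :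
    ∃ y' ∈ t, ‖y - y'‖ ≤ r := by
  obtain ⟨y', hy', b, hb, rfl⟩ := hst hy
  exact ⟨y', hy', by simpa using hb⟩

namespace EReal

theorem biSup_le_biSup_add {α β : Type*} {s : Set α} {t : Set β} {g : α → EReal} {h : β → EReal}
    {c : EReal} (hgh : ∀ a ∈ s, ∃ b ∈ t, g a ≤ h b + c) :
    ⨆ a ∈ s, g a ≤ (⨆ b ∈ t, h b) + c :=
  iSup₂_le fun a ha ↦
    let ⟨b, hb, hab⟩ := hgh a ha
    hab.trans (add_le_add_left (le_iSup₂ (f := fun b _ ↦ h b) b hb) c)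

theorem le_add_coe_of_toReal_le {a b : EReal} {c : ℝ} (ha : a ≠ ⊤) (hb : b ≠ ⊥) (hb' : b ≠ ⊤)
    (hab : a.toReal ≤ b.toReal + c) : a ≤ b + c := by
  lift b to ℝ using ⟨hb', hb⟩
  calc a ≤ (a.toReal : EReal) := le_coe_toReal ha
    _ ≤ b + c := by exact_mod_cast hab

theorem abs_toReal_sub_le {a b : EReal} {c : ℝ} (ha : a ≠ ⊥) (ha' : a ≠ ⊤) (hb : b ≠ ⊥)
    (hb' : b ≠ ⊤) (hab : a ≤ b + c) (hba : b ≤ a + c) : |a.toReal - b.toReal| ≤ c := by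
  lift a to ℝ using ⟨ha', ha⟩
  lift b to ℝ using ⟨hb', hb⟩
  norm_cast at hab hba
  simp only [toReal_coe, abs_sub_le_iff]
  constructor <;> linarith

end EReal

noncomputable def marginal {X Y : Type*} (F : X → Set Y) (f : X × Y → EReal) (x : X) : EReal :=
  ⨆ y ∈ F x, f (x, y)

section Marginal

variable {X Y : Type*} {F : X → Set Y} {U : Set X} {f : X × Y → EReal}

theorem marginal_ne_bot (hFne : ∀ x ∈ U, (F x).Nonempty)
    (hffin : ∀ p : X × Y, p.1 ∈ U → p.2 ∈ F p.1 → f p ≠ ⊥ ∧ f p ≠ ⊤) {x : X} (hx : x ∈ U) :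
    marginal F f x ≠ ⊥ := by
  obtain ⟨y, hy⟩ := hFne x hx
  exact ne_bot_of_le_ne_bot (hffin (x, y) hx hy).1 (le_iSup₂ (f := fun y _ ↦ f (x, y)) y hy)

variable [SeminormedAddCommGroup X] [SeminormedAddCommGroup Y] {ℓ ℓ' : ℝ}

theorem exists_mem_apply_le_apply_add (hℓ' : 0 ≤ ℓ')
    (hFlip : ∀ x ∈ U, ∀ x' ∈ U, F x ⊆ F x' + closedBall 0 (ℓ * ‖x - x'‖))
    (hffin : ∀ p : X × Y, p.1 ∈ U → p.2 ∈ F p.1 → f p ≠ ⊥ ∧ f p ≠ ⊤)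
    (hflip : ∀ p q : X × Y, p.1 ∈ U → p.2 ∈ F p.1 → q.1 ∈ U → q.2 ∈ F q.1 →
      |(f p).toReal - (f q).toReal| ≤ ℓ' * (‖p.1 - q.1‖ + ‖p.2 - q.2‖))
    {x x' : X} (hx : x ∈ U) (hx' : x' ∈ U) {y : Y} (hy : y ∈ F x) :
    ∃ y' ∈ F x', f (x, y) ≤ f (x', y') + (ℓ' * (1 + ℓ) * ‖x - x'‖ : ℝ) := by
  obtain ⟨y', hy', hyy'⟩ := exists_mem_norm_sub_le_of_subset_add_closedBall (hFlip x hx x' hx') hy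
  refine ⟨y', hy', EReal.le_add_coe_of_toReal_le (hffin _ hx hy).2 (hffin _ hx' hy').1
    (hffin _ hx' hy').2 ?_⟩
  have hf := (le_abs_self _).trans (hflip (x, y) (x', y') hx hy hx' hy')
  have : ℓ' * ‖y - y'‖ ≤ ℓ' * (ℓ * ‖x - x'‖) := mul_le_mul_of_nonneg_left hyy' hℓ'
  dsimp only at hf
  linarith

theorem marginal_le_marginal_add (hℓ' : 0 ≤ ℓ')
    (hFlip : ∀ x ∈ U, ∀ x' ∈ U, F x ⊆ F x' + closedBall 0 (ℓ * ‖x - x'‖))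
    (hffin : ∀ p : X × Y, p.1 ∈ U → p.2 ∈ F p.1 → f p ≠ ⊥ ∧ f p ≠ ⊤)
    (hflip : ∀ p q : X × Y, p.1 ∈ U → p.2 ∈ F p.1 → q.1 ∈ U → q.2 ∈ F q.1 →
      |(f p).toReal - (f q).toReal| ≤ ℓ' * (‖p.1 - q.1‖ + ‖p.2 - q.2‖))
    {x x' : X} (hx : x ∈ U) (hx' : x' ∈ U) :
    marginal F f x ≤ marginal F f x' + (ℓ' * (1 + ℓ) * ‖x - x'‖ : ℝ) :=
  EReal.biSup_le_biSup_add fun _ hy ↦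
    exists_mem_apply_le_apply_add hℓ' hFlip hffin hflip hx hx' hy

end Marginal

theorem stmt8_general
    {X Y : Type*} [NormedAddCommGroup X]
    [NormedAddCommGroup Y]
    (F : X → Set Y) (U : Set X) (f : X × Y → EReal) (ℓ ℓ' : ℝ)
    (hℓ' : 0 < ℓ')
    (hFne : ∀ x ∈ U, (F x).Nonempty)
    (hFlip : ∀ x ∈ U, ∀ x' ∈ U, F x ⊆ F x' + Metric.closedBall (0 : Y) (ℓ * ‖x - x'‖))
    (hffin : ∀ p : X × Y, p.1 ∈ U → p.2 ∈ F p.1 → f p ≠ ⊥ ∧ f p ≠ ⊤)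
    (hflip : ∀ p q : X × Y, p.1 ∈ U → p.2 ∈ F p.1 → q.1 ∈ U → q.2 ∈ F q.1 →
      |(f p).toReal - (f q).toReal| ≤ ℓ' * (‖p.1 - q.1‖ + ‖p.2 - q.2‖))
    (xbar : X) (hx : xbar ∈ U)
    (hPhibar : (⨆ y ∈ F xbar, f (xbar, y)) ≠ ⊤) :
    (∀ x ∈ U, (⨆ y ∈ F x, f (x, y)) ≠ ⊥ ∧ (⨆ y ∈ F x, f (x, y)) ≠ ⊤) ∧
    (∀ x ∈ U, ∀ x' ∈ U,
      |(⨆ y ∈ F x, f (x, y)).toReal - (⨆ y ∈ F x', f (x', y)).toReal| ≤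
        ℓ' * (1 + ℓ) * ‖x - x'‖) := by
  have hle : ∀ x ∈ U, ∀ x' ∈ U,
      marginal F f x ≤ marginal F f x' + (ℓ' * (1 + ℓ) * ‖x - x'‖ : ℝ) :=
    fun x hx x' hx' ↦ marginal_le_marginal_add hℓ'.le hFlip hffin hflip hx hx'
  have hbot : ∀ x ∈ U, marginal F f x ≠ ⊥ := fun x ↦ marginal_ne_bot hFne hffin
  have htop : ∀ x ∈ U, marginal F f x ≠ ⊤ := fun x hxU ↦
    ne_top_of_le_ne_top (EReal.add_lt_top hPhibar (EReal.coe_ne_top _)).ne (hle x hxU xbar hx)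
  refine ⟨fun x hx ↦ ⟨hbot x hx, htop x hx⟩, fun x hx x' hx' ↦ ?_⟩
  have hle' := hle x' hx' x hx
  rw [norm_sub_rev] at hle'
  exact EReal.abs_toReal_sub_le (hbot x hx) (htop x hx) (hbot x' hx') (htop x' hx')
    (hle x hx x' hx') hle'

/-- Lipschitz property of the sup-marginal function Φ(x) = sup_{y ∈ F x} f(x,y). -/
theorem stmt8
    {X Y : Type*} [NormedAddCommGroup X] [NormedSpace ℝ X] [CompleteSpace X]
    [NormedAddCommGroup Y] [NormedSpace ℝ Y] [CompleteSpace Y]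
    (F : X → Set Y) (U : Set X) (f : X × Y → EReal) (ℓ ℓ' : ℝ)
    (hℓ : 0 < ℓ) (hℓ' : 0 < ℓ')
    (hFne : ∀ x ∈ U, (F x).Nonempty)
    (hFlip : ∀ x ∈ U, ∀ x' ∈ U, F x ⊆ F x' + Metric.closedBall (0 : Y) (ℓ * ‖x - x'‖))
    (hffin : ∀ p : X × Y, p.1 ∈ U → p.2 ∈ F p.1 → f p ≠ ⊥ ∧ f p ≠ ⊤)
    (hflip : ∀ p q : X × Y, p.1 ∈ U → p.2 ∈ F p.1 → q.1 ∈ U → q.2 ∈ F q.1 →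
      |(f p).toReal - (f q).toReal| ≤ ℓ' * (‖p.1 - q.1‖ + ‖p.2 - q.2‖))
    (xbar : X) (hx : xbar ∈ U)
    (hPhibar : (⨆ y ∈ F xbar, f (xbar, y)) ≠ ⊤) :
    (∀ x ∈ U, (⨆ y ∈ F x, f (x, y)) ≠ ⊥ ∧ (⨆ y ∈ F x, f (x, y)) ≠ ⊤) ∧
    (∀ x ∈ U, ∀ x' ∈ U,
      |(⨆ y ∈ F x, f (x, y)).toReal - (⨆ y ∈ F x', f (x', y)).toReal| ≤
        ℓ' * (1 + ℓ) * ‖x - x'‖) :=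
  stmt8_general F U f ℓ ℓ' hℓ' hFne hFlip hffin hflip xbar hx hPhibar
end

section
/- Suppose F is locally Lipschitzian at x̄ and WMin(F(x̄),K) ≠ ∅. Then the scalarizing functional f_{l,x̄} is locally Lipschitzian at x̄, i.e., there is a neighborhood of x̄ on which f_{l,x̄} is finite and Lipschitzian. -/
/-!
Pick `r > 0` with `closedBall e r ⊆ K`. Then `(‖y‖ / r) • e - y ∈ K`, which makes the Gerstewitz
functional `(1 / r)`-Lipschitz; pointedness is what keeps it finite. Pushing a point of `F x`
into `F x'` costs at most `ℓ ‖x - x'‖`, so every inner infimum, and hence their supremum,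
satisfies `f(x') ≤ f(x) + (ℓ / r) ‖x - x'‖` near `x̄`. Such a one-sided estimate propagates
finiteness from the single point `x̄`, where `Ψ_e(0)` bounds `f(x̄)` from above and a weakly
minimal point `w` of `F x̄` gives `f(x̄) ≥ inf_{y ∈ F x̄} Ψ_e(y - w) ≥ 0`.
-/

open Set Topology Metric Pointwise

def ConvexCone.ofSmulMem {Y : Type*} [AddCommGroup Y] [Module ℝ Y] (K : Set Y)
    (hcv : Convex ℝ K) (hsmul : ∀ t : ℝ, 0 ≤ t → ∀ y ∈ K, t • y ∈ K) : ConvexCone ℝ Y where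
  carrier := K
  smul_mem' c hc x hx := hsmul c hc.le x hx
  add_mem' a ha b hb := by
    have hmid := hsmul 2 zero_le_two _ (hcv ha hb (by norm_num : (0 : ℝ) ≤ 1 / 2)
      (by norm_num : (0 : ℝ) ≤ 1 / 2) (by norm_num))
    rwa [smul_add, smul_smul, smul_smul, show (2 : ℝ) * (1 / 2) = 1 by norm_num,
      one_smul, one_smul] at hmid

namespace ConvexCone

variable {Y : Type*} [NormedAddCommGroup Y] [NormedSpace ℝ Y] {C : ConvexCone ℝ Y}

theorem smul_mem_interior {c : ℝ} (hc : 0 < c) {y : Y} (hy : y ∈ interior (C : Set Y)) :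
    c • y ∈ interior (C : Set Y) := by
  refine interior_maximal ?_ (isOpen_interior.smul₀ hc.ne') (smul_mem_smul_set hy)
  rintro _ ⟨u, hu, rfl⟩
  exact C.smul_mem hc (interior_subset hu)

theorem add_mem_interior {a u : Y} (ha : a ∈ C) (hu : u ∈ interior (C : Set Y)) :
    a + u ∈ interior (C : Set Y) := by
  refine interior_maximal ?_ (isOpen_interior.vadd a) (vadd_mem_vadd_set hu)
  rintro _ ⟨v, hv, rfl⟩
  exact C.add_mem ha (interior_subset hv)

theorem Salient.zero_notMem_interior [Nontrivial Y] (hC : C.Salient) :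
    (0 : Y) ∉ interior (C : Set Y) := by
  intro h0
  have hnhds : interior (C : Set Y) ∩ -interior (C : Set Y) ∈ 𝓝 (0 : Y) :=
    Filter.inter_mem (isOpen_interior.mem_nhds h0)
      (neg_mem_nhds_zero _ (isOpen_interior.mem_nhds h0))
  have hsub : interior (C : Set Y) ∩ -interior (C : Set Y) ⊆ {0} := by
    rintro x ⟨hx, hx'⟩
    by_contra hne
    exact hC x (interior_subset hx) hne (interior_subset hx')
  have := mem_interior_iff_mem_nhds.2 (Filter.mem_of_superset hnhds hsub)
  simp [interior_singleton] at this

end ConvexCone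

section Gerstewitz

variable {Y : Type*} [NormedAddCommGroup Y] [NormedSpace ℝ Y] {C : ConvexCone ℝ Y} {e : Y}
  {r : ℝ}

theorem smul_norm_div_sub_mem (hC : C.Pointed) (hr : 0 < r) (hball : closedBall e r ⊆ C)
    (y : Y) : (‖y‖ / r) • e - y ∈ C := by
  rcases eq_or_ne y 0 with rfl | hy
  · rw [norm_zero, zero_div, zero_smul, sub_zero]
    exact hC
  have hd : 0 < ‖y‖ / r := div_pos (norm_pos_iff.2 hy) hr
  have hmem : e - (‖y‖ / r)⁻¹ • y ∈ closedBall e r := by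
    rw [mem_closedBall, dist_eq_norm, sub_sub_cancel_left, norm_neg, norm_smul, norm_inv,
      Real.norm_of_nonneg hd.le, inv_div, div_mul_cancel₀ _ (norm_ne_zero_iff.2 hy)]
  have := C.smul_mem hd (hball hmem)
  rwa [smul_sub, smul_inv_smul₀ hd.ne'] at this

/-- Below `-‖y‖ / r`, `-(t • e - y)` would lie in the interior of `C`, which salience forbids. -/
theorem neg_norm_div_le_of_smul_sub_mem [Nontrivial Y] (hC₀ : C.Pointed) (hC : C.Salient)
    (hr : 0 < r) (hball : closedBall e r ⊆ C) {y : Y} {t : ℝ} (ht : t • e - y ∈ C) :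
    -(‖y‖ / r) ≤ t := by
  by_contra! hlt
  have he : e ∈ interior (C : Set Y) :=
    interior_mono hball (ball_subset_interior_closedBall (mem_ball_self hr))
  have hint : -(t • e - y) ∈ interior (C : Set Y) := by
    have := C.add_mem_interior (smul_norm_div_sub_mem hC₀ hr hball (-y))
      (C.smul_mem_interior (by linarith : 0 < -t - ‖y‖ / r) he)
    convert this using 1
    rw [norm_neg, sub_smul, neg_smul]; abel
  have hzero : t • e - y = 0 := by
    by_contra hne
    exact hC _ ht hne (interior_subset hint)
  rw [hzero, neg_zero] at hint
  exact hC.zero_notMem_interior hint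

theorem lipschitzWith_psiE (hC₀ : C.Pointed) (hC : C.Salient) (hr : 0 < r)
    (hball : closedBall e r ⊆ C) : LipschitzWith (Real.toNNReal r⁻¹) (psiE (C : Set Y) e) := by
  refine LipschitzWith.of_le_add_mul' _ fun a b => ?_
  rcases subsingleton_or_nontrivial Y with hY | hY
  · simp [Subsingleton.elim a b]
  have hbdd : BddBelow {t : ℝ | t • e - a ∈ C} :=
    ⟨_, fun t ht => neg_norm_div_le_of_smul_sub_mem hC₀ hC hr hball ht⟩
  have hne : {t : ℝ | t • e - b ∈ C}.Nonempty := ⟨_, smul_norm_div_sub_mem hC₀ hr hball b⟩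
  rw [dist_eq_norm, ← div_eq_inv_mul, ← sub_le_iff_le_add]
  refine le_csInf hne fun t ht => sub_le_iff_le_add.2 (csInf_le hbdd ?_)
  show (t + ‖a - b‖ / r) • e - a ∈ C
  convert C.add_mem ht (smul_norm_div_sub_mem hC₀ hr hball (a - b)) using 1
  rw [add_smul]; abel

theorem psiE_nonneg (he : e ∈ interior (C : Set Y)) {y : Y} (hy : -y ∉ interior (C : Set Y)) :
    0 ≤ psiE C e y := by
  refine Real.sInf_nonneg fun t ht => ?_
  by_contra! htneg
  refine hy ?_
  convert C.add_mem_interior ht (C.smul_mem_interior (neg_pos.2 htneg) he) using 1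
  rw [neg_smul]; abel

end Gerstewitz

theorem EReal.ne_bot_and_ne_top_of_le_add {X : Type*} {f : X → EReal} {V : Set X}
    {D : X → X → ℝ} (h : ∀ x ∈ V, ∀ x' ∈ V, f x' ≤ f x + D x x') {x₀ : X} (hx₀ : x₀ ∈ V)
    (hbot : f x₀ ≠ ⊥) (htop : f x₀ ≠ ⊤) : ∀ x ∈ V, f x ≠ ⊥ ∧ f x ≠ ⊤ := by
  intro x hx
  refine ⟨fun hx_bot => hbot (le_bot_iff.1 ?_), ne_top_of_le_ne_top ?_ (h x₀ hx₀ x hx)⟩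
  · simpa [hx_bot] using h x hx x₀ hx₀
  · rw [← EReal.coe_toReal htop hbot, ← EReal.coe_add]
    exact EReal.coe_ne_top _

theorem EReal.abs_toReal_sub_le_of_le_add {X : Type*} [SeminormedAddCommGroup X] {f : X → EReal}
    {V : Set X} {c : ℝ} (h : ∀ x ∈ V, ∀ x' ∈ V, f x' ≤ f x + (c * ‖x - x'‖ : ℝ))
    (hfin : ∀ x ∈ V, f x ≠ ⊥ ∧ f x ≠ ⊤) :
    ∀ x ∈ V, ∀ x' ∈ V, |(f x).toReal - (f x').toReal| ≤ c * ‖x - x'‖ := by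
  intro x hx x' hx'
  have h₁ := h x hx x' hx'
  have h₂ := h x' hx' x hx
  rw [← EReal.coe_toReal (hfin x hx).2 (hfin x hx).1,
    ← EReal.coe_toReal (hfin x' hx').2 (hfin x' hx').1] at h₁ h₂
  norm_cast at h₁ h₂
  rw [norm_sub_rev] at h₂
  exact abs_sub_le_iff.2 ⟨by linarith, by linarith⟩

theorem EReal.biInf_coe_le_biInf_coe_add {ι : Type*} {A B : Set ι} {f : ι → ℝ} {c : ℝ}
    (h : ∀ i ∈ A, ∃ j ∈ B, f j ≤ f i + c) :
    ⨅ j ∈ B, (f j : EReal) ≤ (⨅ i ∈ A, (f i : EReal)) + c := by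
  rw [← EReal.sub_le_iff_le_add (.inl (EReal.coe_ne_bot c)) (.inl (EReal.coe_ne_top c))]
  refine le_iInf₂ fun i hi => ?_
  obtain ⟨j, hj, hji⟩ := h i hi
  calc (⨅ j ∈ B, (f j : EReal)) - c ≤ (f j : EReal) - c := EReal.sub_le_sub (iInf₂_le j hj) le_rfl
    _ ≤ f i := by rw [← EReal.coe_sub]; exact_mod_cast (by linarith)

section Scalarization

variable {X Y : Type*} [NormedAddCommGroup X] [NormedSpace ℝ X] [NormedAddCommGroup Y]
  [NormedSpace ℝ Y] {K : Set Y} {e : Y} {F : X → Set Y} {L : NNReal}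

theorem glow_le_glow_add (hψ : LipschitzWith L (psiE K e)) {x x' : X} {ρ : ℝ}
    (hF : F x ⊆ F x' + closedBall 0 ρ) (z : Y) :
    glow K e F x' z ≤ glow K e F x z + (L * ρ : ℝ) := by
  refine EReal.biInf_coe_le_biInf_coe_add fun y hy => ?_
  obtain ⟨y', hy', b, hb, rfl⟩ := hF hy
  refine ⟨y', hy', ?_⟩
  have hb : ‖b‖ ≤ ρ := by simpa using hb
  calc psiE K e (y' - z) ≤ psiE K e (y' + b - z) + L * dist (y' - z) (y' + b - z) :=
        hψ.le_add_mul _ _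
    _ ≤ psiE K e (y' + b - z) + L * ρ := by
        rw [dist_eq_norm, show y' - z - (y' + b - z) = -b by abel, norm_neg]
        gcongr

theorem flow_le_flow_add (hψ : LipschitzWith L (psiE K e)) {xbar x x' : X} {ρ : ℝ}
    (hF : F x ⊆ F x' + closedBall 0 ρ) :
    flow K e F xbar x' ≤ flow K e F xbar x + (L * ρ : ℝ) :=
  iSup₂_le fun z hz => (glow_le_glow_add hψ hF z).trans
    (add_le_add_left (le_iSup₂ (f := fun z _ => glow K e F x z) z hz) _)

theorem flow_self_ne_top (xbar : X) : flow K e F xbar xbar ≠ ⊤ := by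
  refine ne_top_of_le_ne_top (EReal.coe_ne_top (psiE K e 0)) (iSup₂_le fun z hz => ?_)
  have := iInf₂_le (f := fun y _ => (psiE K e (y - z) : EReal)) z hz
  rwa [sub_self] at this

theorem zero_le_flow_self {C : ConvexCone ℝ Y} (he : e ∈ interior (C : Set Y)) {xbar : X} {w : Y}
    (hw : w ∈ wMinSet (F xbar) C) : 0 ≤ flow C e F xbar xbar := by
  obtain ⟨hwF, hwmin⟩ := hw
  have hglow : 0 ≤ glow C e F xbar w := by
    refine le_iInf₂ fun y hy => EReal.coe_nonneg.2 (psiE_nonneg he ?_)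
    rw [neg_sub]
    exact hwmin y hy
  unfold flow
  exact le_iSup₂_of_le w hwF hglow

end Scalarization

theorem stmt11_general
    {X Y : Type*} [NormedAddCommGroup X] [NormedSpace ℝ X]
    [NormedAddCommGroup Y] [NormedSpace ℝ Y]
    (K : Set Y) (e : Y) (F : X → Set Y) (xbar : X)
    (hKcv : Convex ℝ K)
    (hKcone : ∀ t : ℝ, 0 ≤ t → ∀ y ∈ K, t • y ∈ K)
    (hKpt : K ∩ (-K) = {0})
    (he : e ∈ interior K)
    (hFlip : ∃ U ∈ 𝓝 xbar, ∃ ℓ : ℝ, 0 ≤ ℓ ∧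
      ∀ x ∈ U, ∀ x' ∈ U, F x ⊆ F x' + Metric.closedBall (0 : Y) (ℓ * ‖x - x'‖))
    (hW : (wMinSet (F xbar) K).Nonempty) :
    ∃ V ∈ 𝓝 xbar, ∃ c : ℝ,
      (∀ x ∈ V, flow K e F xbar x ≠ ⊥ ∧ flow K e F xbar x ≠ ⊤) ∧
      (∀ x ∈ V, ∀ x' ∈ V,
        |(flow K e F xbar x).toReal - (flow K e F xbar x').toReal| ≤ c * ‖x - x'‖) := by
  obtain ⟨U, hU, ℓ, -, hFU⟩ := hFlip
  obtain ⟨w, hw⟩ := hW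
  obtain ⟨C, rfl⟩ : ∃ C : ConvexCone ℝ Y, (C : Set Y) = K :=
    ⟨ConvexCone.ofSmulMem K hKcv hKcone, rfl⟩
  have hC₀ : C.Pointed := (hKpt.symm.subset rfl).1
  have hC : C.Salient := fun y hy hy0 hy' => hy0 (hKpt.subset ⟨hy, hy'⟩)
  obtain ⟨r, hr, hball⟩ := nhds_basis_closedBall.mem_iff.1 (mem_interior_iff_mem_nhds.1 he)
  have hflow : ∀ x ∈ U, ∀ x' ∈ U, flow C e F xbar x' ≤
      flow C e F xbar x + ((Real.toNNReal r⁻¹ * ℓ : ℝ) * ‖x - x'‖ : ℝ) := fun x hx x' hx' => by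
    simpa only [mul_assoc] using
      flow_le_flow_add (lipschitzWith_psiE hC₀ hC hr hball) (hFU x hx x' hx')
  have hfin := EReal.ne_bot_and_ne_top_of_le_add hflow (mem_of_mem_nhds hU)
    (ne_bot_of_le_ne_bot EReal.zero_ne_bot (zero_le_flow_self he hw)) (flow_self_ne_top xbar)
  exact ⟨U, hU, _, hfin, EReal.abs_toReal_sub_le_of_le_add hflow hfin⟩

/-- if F is locally Lipschitz at x̄ and WMin(F(x̄),K) ≠ ∅, then f_{l,x̄} is
locally Lipschitz at x̄ (finite and Lipschitz on some neighborhood of x̄). -/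
theorem stmt11
    {X Y : Type*} [NormedAddCommGroup X] [NormedSpace ℝ X] [CompleteSpace X]
    [NormedAddCommGroup Y] [NormedSpace ℝ Y] [CompleteSpace Y]
    (K : Set Y) (e : Y) (F : X → Set Y) (Ω : Set X) (xbar : X)
    (hKcl : IsClosed K) (hKcv : Convex ℝ K)
    (hKcone : ∀ t : ℝ, 0 ≤ t → ∀ y ∈ K, t • y ∈ K)
    (hKpt : K ∩ (-K) = {0})
    (he : e ∈ interior K)
    (hΩne : Ω.Nonempty) (hΩcl : IsClosed Ω)
    (hΩdom : Ω ⊆ interior {x | (F x).Nonempty})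
    (hxΩ : xbar ∈ Ω)
    (hFlip : ∃ U ∈ 𝓝 xbar, ∃ ℓ : ℝ, 0 ≤ ℓ ∧
      ∀ x ∈ U, ∀ x' ∈ U, F x ⊆ F x' + Metric.closedBall (0 : Y) (ℓ * ‖x - x'‖))
    (hW : (wMinSet (F xbar) K).Nonempty) :
    ∃ V ∈ 𝓝 xbar, ∃ c : ℝ,
      (∀ x ∈ V, flow K e F xbar x ≠ ⊥ ∧ flow K e F xbar x ≠ ⊤) ∧
      (∀ x ∈ V, ∀ x' ∈ V,
        |(flow K e F xbar x).toReal - (flow K e F xbar x').toReal| ≤ c * ‖x - x'‖) :=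
  stmt11_general K e F xbar hKcv hKcone hKpt he hFlip hW
end

section
/- Let ȳ ∈ WMax(H_F(x̄),K), where H_F(x̄) := F(x̄) − K, and suppose H_F(x̄) is a convex and K-upper bounded set. Then g_{u,x̄} is convex, finite and continuous on Y, and its convex subdifferential at ȳ satisfies ∂g_{u,x̄}(ȳ) = ∂Ψ_e(0) ∩ N(ȳ, H_F(x̄)), where N(ȳ, C) := {y* ∈ Y* : ⟨y*, y − ȳ⟩ ≤ 0 for all y ∈ C} is the normal cone of convex analysis. -/
open Set Topology Metric Pointwise

/-
Both `Ψ_e` and `g_{u,x̄}` are instances of `φ_{A,e}(y) = inf {t | y ∈ t • e + A}`: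
`Ψ_e = φ_{-K,e}` and `g_{u,x̄} = φ_{H,e}` with `H = F(x̄) - K`. When `A - K ⊆ A` and `e ∈ int K`,
the set `{t | y - t • e ∈ A}` contains every `t > φ_{A,e}(y)`, and a weakly maximal `a₀ ∈ A`
bounds it below by `-c‖y - a₀‖`. Hence `φ_{A,e}` is finite, Lipschitz since `e` is an interior
direction, and convex when `A` is. Weak maximality also gives `φ_{A,e}(a₀) = 0`, and writing
`y - a₀ = t • e + (y - t • e - a₀)` with `y - t • e ∈ A` splits a subgradient inequality at `a₀`
into one for `Ψ_e` at `0` and a normal-cone condition at `a₀`.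
-/

lemma exists_pointedCone_coe_eq {E : Type*} [AddCommGroup E] [Module ℝ E] {K : Set E}
    (hcv : Convex ℝ K) (hcone : ∀ t : ℝ, 0 ≤ t → ∀ y ∈ K, t • y ∈ K) (hne : K.Nonempty) :
    ∃ C : PointedCone ℝ E, (C : Set E) = K := by
  have hadd : ∀ a ∈ K, ∀ b ∈ K, a + b ∈ K := fun a ha b hb => by
    have h := hcone 2 zero_le_two _ (hcv ha hb one_half_pos.le one_half_pos.le (add_halves 1))
    rwa [smul_add, smul_smul, smul_smul, mul_one_div_cancel two_ne_zero, one_smul, one_smul] at h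
  have hzero : (0 : E) ∈ K := by
    obtain ⟨y, hy⟩ := hne
    simpa using hcone 0 le_rfl y hy
  exact ⟨{ carrier := K,
           add_mem' := fun ha hb => hadd _ ha _ hb,
           zero_mem' := hzero,
           smul_mem' := fun c x hx => hcone c c.2 x hx }, rfl⟩

-- Junk value: `sInf` is `0` on an empty or unbounded-below set of reals.
noncomputable def scalarization {E : Type*} [AddCommGroup E] [Module ℝ E] (A : Set E) (e y : E) :
    ℝ :=
  sInf {t : ℝ | y - t • e ∈ A}

section

variable {Y : Type*} [NormedAddCommGroup Y] [NormedSpace ℝ Y] {K : PointedCone ℝ Y}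

namespace PointedCone

lemma smul_mem_interior {s : ℝ} (hs : 0 < s) {x : Y} (hx : x ∈ interior (K : Set Y)) :
    s • x ∈ interior (K : Set Y) := by
  have hsub : s • interior (K : Set Y) ⊆ interior K := by
    rw [← interior_smul₀ hs.ne']
    exact interior_mono <| by
      rintro _ ⟨y, hy, rfl⟩
      exact K.smul_mem hs.le hy
  exact hsub (smul_mem_smul_set hx)

lemma exists_smul_add_mem_interior {e : Y} (he : e ∈ interior (K : Set Y)) :
    ∃ c ≥ 0, ∀ (z : Y) (s : ℝ), c * ‖z‖ < s → s • e + z ∈ interior (K : Set Y) := by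
  obtain ⟨r, hr, hball⟩ := Metric.isOpen_iff.1 isOpen_interior e he
  refine ⟨r⁻¹, by positivity, fun z s hs => ?_⟩
  have hs0 : 0 < s := (by positivity : 0 ≤ r⁻¹ * ‖z‖).trans_lt hs
  have hmem : e + s⁻¹ • z ∈ interior (K : Set Y) := hball <| by
    rw [mem_ball_iff_norm, add_sub_cancel_left, norm_smul, Real.norm_of_nonneg (inv_pos.2 hs0).le,
      inv_mul_lt_iff₀ hs0]
    rwa [inv_mul_lt_iff₀ hr, mul_comm] at hs
  simpa [smul_add, smul_smul, hs0.ne'] using K.smul_mem_interior hs0 hmem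

lemma sub_mem_sub_of_mem_sub (B : Set Y) :
    ∀ a ∈ B - (K : Set Y), ∀ k ∈ K, a - k ∈ B - (K : Set Y) := by
  rintro _ ⟨b, hb, k', hk', rfl⟩ k hk
  exact ⟨b, hb, k' + k, K.add_mem hk' hk, (sub_sub b k' k).symm⟩

end PointedCone

section Scalarization

variable {A : Set Y} {e a₀ y : Y} {t : ℝ}

lemma scalarization_set_bddBelow (he : e ∈ interior (K : Set Y)) (ha₀ : a₀ ∈ wMaxSet A K)
    (y : Y) : BddBelow {t : ℝ | y - t • e ∈ A} := by
  obtain ⟨c, -, hc⟩ := K.exists_smul_add_mem_interior he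
  refine ⟨-(c * ‖y - a₀‖), fun t ht => ?_⟩
  by_contra! hlt
  apply ha₀.2 _ ht
  convert hc (y - a₀) (-t) (by linarith) using 1
  rw [neg_smul]
  abel

lemma scalarization_le (he : e ∈ interior (K : Set Y)) (ha₀ : a₀ ∈ wMaxSet A K)
    (h : y - t • e ∈ A) : scalarization A e y ≤ t :=
  csInf_le (scalarization_set_bddBelow he ha₀ y) h

lemma sub_smul_mem_of_scalarization_lt (hA : ∀ a ∈ A, ∀ k ∈ K, a - k ∈ A)
    (he : e ∈ interior (K : Set Y)) (ha₀ : a₀ ∈ A) (h : scalarization A e y < t) :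
    y - t • e ∈ A := by
  have hne : {t : ℝ | y - t • e ∈ A}.Nonempty := by
    obtain ⟨c, -, hc⟩ := K.exists_smul_add_mem_interior he
    refine ⟨c * ‖a₀ - y‖ + 1, ?_⟩
    show y - _ • e ∈ A
    convert hA a₀ ha₀ _ (interior_subset (hc (a₀ - y) _ (lt_add_one _))) using 1
    abel
  obtain ⟨s, hs, hst⟩ := exists_lt_of_csInf_lt hne h
  convert hA _ hs _ (K.smul_mem (sub_nonneg.2 hst.le) (interior_subset he)) using 1
  rw [sub_smul]
  abel

lemma convexOn_scalarization (hAc : Convex ℝ A) (hA : ∀ a ∈ A, ∀ k ∈ K, a - k ∈ A)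
    (he : e ∈ interior (K : Set Y)) (ha₀ : a₀ ∈ wMaxSet A K) :
    ConvexOn ℝ univ (scalarization A e) := by
  refine ⟨convex_univ, fun y₁ _ y₂ _ a b ha hb hab => le_of_forall_pos_le_add fun ε hε => ?_⟩
  set t₁ := scalarization A e y₁ + ε
  set t₂ := scalarization A e y₂ + ε
  have h₁ : y₁ - t₁ • e ∈ A := sub_smul_mem_of_scalarization_lt hA he ha₀.1 (by simp [t₁, hε])
  have h₂ : y₂ - t₂ • e ∈ A := sub_smul_mem_of_scalarization_lt hA he ha₀.1 (by simp [t₂, hε])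
  have h := scalarization_le he ha₀ (y := a • y₁ + b • y₂) (t := a * t₁ + b * t₂) <| by
    convert hAc h₁ h₂ ha hb hab using 1
    simp only [smul_sub, add_smul, smul_smul]
    abel
  simp only [smul_eq_mul] at h ⊢
  linear_combination h + ε * hab

lemma exists_lipschitzWith_scalarization (hA : ∀ a ∈ A, ∀ k ∈ K, a - k ∈ A)
    (he : e ∈ interior (K : Set Y)) (ha₀ : a₀ ∈ wMaxSet A K) :
    ∃ C, LipschitzWith C (scalarization A e) := by
  obtain ⟨c, hc0, hc⟩ := K.exists_smul_add_mem_interior he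
  refine ⟨c.toNNReal, LipschitzWith.of_le_add_mul _ fun y' y => ?_⟩
  rw [Real.coe_toNNReal _ hc0, dist_eq_norm]
  refine le_of_forall_pos_le_add fun ε hε => ?_
  set t := scalarization A e y + ε / 2 with ht
  set s := c * ‖y' - y‖ + ε / 2 with hs
  have hy : y - t • e ∈ A := sub_smul_mem_of_scalarization_lt hA he ha₀.1 (by simp [t, hε])
  have hsK : s • e + (y - y') ∈ interior (K : Set Y) := hc _ _ (by simp [s, norm_sub_rev, hε])
  have h := scalarization_le he ha₀ (y := y') (t := t + s) <| by
    convert hA _ hy _ (interior_subset hsK) using 1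
    rw [add_smul]
    abel
  linarith

lemma scalarization_eq_zero (hA : ∀ a ∈ A, ∀ k ∈ K, a - k ∈ A) (he : e ∈ interior (K : Set Y))
    (ha₀ : a₀ ∈ wMaxSet A K) : scalarization A e a₀ = 0 := by
  refine le_antisymm (scalarization_le he ha₀ (by simpa using ha₀.1)) (not_lt.1 fun hneg => ?_)
  obtain ⟨t, hlt, ht⟩ := exists_between hneg
  apply ha₀.2 _ (sub_smul_mem_of_scalarization_lt hA he ha₀.1 hlt)
  simpa [← neg_smul] using K.smul_mem_interior (neg_pos.2 ht) he

end Scalarization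

section Gerstewitz

variable {e y : Y} {t : ℝ}

lemma psiE_eq_scalarization (K : Set Y) (e : Y) : psiE K e = scalarization (-K) e := by
  ext y
  simp only [psiE, scalarization, mem_neg, neg_sub]

lemma zero_mem_wMaxSet_neg (h0 : (0 : Y) ∉ interior (K : Set Y)) :
    (0 : Y) ∈ wMaxSet (-(K : Set Y)) K := by
  refine ⟨by simp, fun b hb hbK => h0 ?_⟩
  have h := (K.convex.combo_interior_self_mem_interior (sub_zero b ▸ hbK) (mem_neg.1 hb)
    one_half_pos one_half_pos.le (add_halves 1))
  rwa [smul_neg, add_neg_cancel] at h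

lemma psiE_le (he : e ∈ interior (K : Set Y)) (h0 : (0 : Y) ∉ interior (K : Set Y))
    (h : t • e - y ∈ K) : psiE K e y ≤ t := by
  rw [psiE_eq_scalarization]
  exact scalarization_le he (zero_mem_wMaxSet_neg h0) (by simpa using h)

lemma sub_mem_of_psiE_lt (he : e ∈ interior (K : Set Y)) (h : psiE K e y < t) : t • e - y ∈ K := by
  rw [psiE_eq_scalarization] at h
  have hneg : ∀ a ∈ -(K : Set Y), ∀ k ∈ K, a - k ∈ -(K : Set Y) := fun a ha k hk => by
    rw [mem_neg, neg_sub, sub_eq_add_neg]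
    exact K.add_mem hk (mem_neg.1 ha)
  simpa using sub_smul_mem_of_scalarization_lt (a₀ := 0) hneg he (by simp) h

variable {A : Set Y} {a₀ : Y}

lemma scalarization_le_psiE_sub (hA : ∀ a ∈ A, ∀ k ∈ K, a - k ∈ A)
    (he : e ∈ interior (K : Set Y)) (ha₀ : a₀ ∈ wMaxSet A K) {a : Y} (ha : a ∈ A) :
    scalarization A e y ≤ psiE K e (y - a) :=
  le_of_forall_gt_imp_ge_of_dense fun t ht => scalarization_le he ha₀ <| by
    convert hA a ha _ (sub_mem_of_psiE_lt he ht) using 1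
    abel

lemma forall_le_scalarization_iff (hA : ∀ a ∈ A, ∀ k ∈ K, a - k ∈ A)
    (he : e ∈ interior (K : Set Y)) (ha₀ : a₀ ∈ wMaxSet A K) (ys : Y →L[ℝ] ℝ) :
    (∀ y, ys (y - a₀) ≤ scalarization A e y) ↔
      (∀ y, ys y ≤ psiE K e y) ∧ ∀ a ∈ A, ys (a - a₀) ≤ 0 := by
  have h0 : (0 : Y) ∉ interior (K : Set Y) := by simpa using ha₀.2 a₀ ha₀.1
  constructor
  · intro h
    refine ⟨fun y => ?_, fun a ha => (h a).trans (scalarization_le he ha₀ (by simpa using ha))⟩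
    calc ys y = ys (y + a₀ - a₀) := by rw [add_sub_cancel_right]
      _ ≤ scalarization A e (y + a₀) := h _
      _ ≤ psiE K e (y + a₀ - a₀) := scalarization_le_psiE_sub hA he ha₀ ha₀.1
      _ = psiE K e y := by rw [add_sub_cancel_right]
  · rintro ⟨hΨ, hN⟩ y
    refine le_of_forall_gt_imp_ge_of_dense fun t ht => ?_
    have hyt := sub_smul_mem_of_scalarization_lt hA he ha₀.1 ht
    calc ys (y - a₀) = ys (t • e) + ys (y - t • e - a₀) := by rw [← map_add]; congr 1; abel
      _ ≤ psiE K e (t • e) + 0 := add_le_add (hΨ _) (hN _ hyt)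
      _ ≤ t := by simpa using psiE_le he h0 (by simp : t • e - t • e ∈ K)

end Gerstewitz

lemma gupp_eq_scalarization {X : Type*} [NormedAddCommGroup X] [NormedSpace ℝ X] {e y₀ : Y}
    (F : X → Set Y) (xbar : X) (he : e ∈ interior (K : Set Y))
    (hy₀ : y₀ ∈ wMaxSet (F xbar - (K : Set Y)) K) (y : Y) :
    gupp K e F xbar y = scalarization (F xbar - (K : Set Y)) e y := by
  have hA := K.sub_mem_sub_of_mem_sub (F xbar)
  have h0 : (0 : Y) ∉ interior (K : Set Y) := by simpa using hy₀.2 y₀ hy₀.1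
  refine le_antisymm (EReal.le_of_forall_lt_iff_le.1 fun t ht => ?_) (le_iInf₂ fun b hb => ?_)
  · obtain ⟨b, hb, k, hk, hbk : b - k = y - t • e⟩ :=
      sub_smul_mem_of_scalarization_lt hA he hy₀.1 (EReal.coe_lt_coe_iff.1 ht)
    have hk' : t • e - (y - b) = k := by
      rw [← sub_sub_cancel b k, hbk]
      abel
    exact (biInf_le _ hb).trans (EReal.coe_le_coe_iff.2 (psiE_le he h0 (hk' ▸ hk)))
  · exact EReal.coe_le_coe_iff.2
      (scalarization_le_psiE_sub hA he hy₀ ⟨b, hb, 0, K.zero_mem, sub_zero b⟩)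

end

theorem stmt16_general
    {X Y : Type*} [NormedAddCommGroup X] [NormedSpace ℝ X]
    [NormedAddCommGroup Y] [NormedSpace ℝ Y]
    (K : Set Y) (e : Y) (F : X → Set Y) (xbar : X)
    (hKcv : Convex ℝ K)
    (hKcone : ∀ t : ℝ, 0 ≤ t → ∀ y ∈ K, t • y ∈ K)
    (he : e ∈ interior K)
    (ybar : Y) (hybar : ybar ∈ wMaxSet (F xbar - K) K)
    (hHconv : Convex ℝ (F xbar - K)) :
    Convex ℝ {p : Y × ℝ | gupp K e F xbar p.1 ≤ (p.2 : EReal)} ∧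
    (∀ y : Y, gupp K e F xbar y ≠ ⊥ ∧ gupp K e F xbar y ≠ ⊤) ∧
    Continuous (gupp K e F xbar) ∧
    ({ys : Y →L[ℝ] ℝ | ∀ y : Y,
        gupp K e F xbar ybar + ((ys (y - ybar) : ℝ) : EReal) ≤ gupp K e F xbar y} =
      {ys : Y →L[ℝ] ℝ | (∀ y : Y, ys y ≤ psiE K e y) ∧
        ∀ y ∈ F xbar - K, ys (y - ybar) ≤ 0}) := by
  obtain ⟨C, rfl⟩ := exists_pointedCone_coe_eq hKcv hKcone ⟨e, interior_subset he⟩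
  have hH := C.sub_mem_sub_of_mem_sub (F xbar)
  have hg : gupp C e F xbar = fun y => (scalarization (F xbar - (C : Set Y)) e y : EReal) :=
    funext (gupp_eq_scalarization F xbar he hybar)
  refine ⟨?_, fun y => ?_, ?_, ?_⟩ <;> simp only [hg]
  · simpa using (convexOn_scalarization hHconv hH he hybar).convex_epigraph
  · exact ⟨EReal.coe_ne_bot _, EReal.coe_ne_top _⟩
  · obtain ⟨c, hc⟩ := exists_lipschitzWith_scalarization hH he hybar
    exact continuous_coe_real_ereal.comp hc.continuous
  · ext ys
    simp only [mem_ofPred_eq, scalarization_eq_zero hH he hybar, ← EReal.coe_add, zero_add,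
      EReal.coe_le_coe_iff]
    exact forall_le_scalarization_iff hH he hybar ys

/-- if H_F(x̄) = F(x̄) - K is convex and K-upper bounded and
ȳ ∈ WMax(H_F(x̄),K), then g_{u,x̄} is convex, finite and continuous on Y, and its convex
subdifferential at ȳ equals ∂Ψ_e(0) ∩ N(ȳ, H_F(x̄)). -/
theorem stmt16
    {X Y : Type*} [NormedAddCommGroup X] [NormedSpace ℝ X] [CompleteSpace X]
    [NormedAddCommGroup Y] [NormedSpace ℝ Y] [CompleteSpace Y]
    (K : Set Y) (e : Y) (F : X → Set Y) (Ω : Set X) (xbar : X)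
    (hKcl : IsClosed K) (hKcv : Convex ℝ K)
    (hKcone : ∀ t : ℝ, 0 ≤ t → ∀ y ∈ K, t • y ∈ K)
    (hKpt : K ∩ (-K) = {0})
    (he : e ∈ interior K)
    (hΩne : Ω.Nonempty) (hΩcl : IsClosed Ω)
    (hΩdom : Ω ⊆ interior {x | (F x).Nonempty})
    (hxΩ : xbar ∈ Ω)
    (ybar : Y) (hybar : ybar ∈ wMaxSet (F xbar - K) K)
    (hHconv : Convex ℝ (F xbar - K))
    (hHub : ∃ μ > (0:ℝ), ∀ a ∈ F xbar - K, μ • e - a ∈ K) :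
    Convex ℝ {p : Y × ℝ | gupp K e F xbar p.1 ≤ (p.2 : EReal)} ∧
    (∀ y : Y, gupp K e F xbar y ≠ ⊥ ∧ gupp K e F xbar y ≠ ⊤) ∧
    Continuous (gupp K e F xbar) ∧
    ({ys : Y →L[ℝ] ℝ | ∀ y : Y,
        gupp K e F xbar ybar + ((ys (y - ybar) : ℝ) : EReal) ≤ gupp K e F xbar y} =
      {ys : Y →L[ℝ] ℝ | (∀ y : Y, ys y ≤ psiE K e y) ∧
        ∀ y ∈ F xbar - K, ys (y - ybar) ≤ 0}) :=
  stmt16_general K e F xbar hKcv hKcone he ybar hybar hHconv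
end
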